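/- arXiv:1401.2102 — 4 statements merged into one kernel-verified Lean document; each statement's English description precedes it below -/
import Mathlib

section
/- Let S ⊆ [m], let i ∈ [m], and let 𝒜 be a family of subsets of [m]. Then |S ∩ 𝒜| ≥ |S ∩ 𝒞_i(𝒜)|, where both are cardinalities of families of sets. -/
/-- The compression `𝒞ᵢ(𝒜) = {Cᵢ(A) : A ∈ 𝒜} ∪ {A ∈ 𝒜 : Cᵢ(A) ∈ 𝒜}`,
where `Cᵢ(A) = A \ {i}`. -/
def compressFam {m : ℕ} (i : Fin m) (𝒜 : Finset (Finset (Fin m))) :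
    Finset (Finset (Fin m)) :=
  𝒜.image (fun A => A.erase i) ∪ 𝒜.filter (fun A => A.erase i ∈ 𝒜)

/-! Taking traces on `S` commutes with removing `i`, so the traces of `𝒞ᵢ(𝒜)` all lie in the
compression `𝒞ᵢ(S ∩ 𝒜)` of the family of traces. Compression preserves cardinality, hence
`|S ∩ 𝒞ᵢ(𝒜)| ≤ |𝒞ᵢ(S ∩ 𝒜)| = |S ∩ 𝒜|`. -/

open Finset FinsetFamily

section
variable {m : ℕ} (i : Fin m) (𝒜 : Finset (Finset (Fin m)))

theorem compressFam_eq_down_compression : compressFam i 𝒜 = 𝓓 i 𝒜 := by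
  ext B
  rw [Down.mem_compression]
  simp only [compressFam, mem_union, mem_image, mem_filter]
  constructor
  · rintro (⟨A, hA, rfl⟩ | hB)
    · by_cases hAi : A.erase i ∈ 𝒜
      · exact Or.inl ⟨hAi, by rwa [erase_idem]⟩
      · have hiA : i ∈ A := by_contra fun h => hAi (by rwa [erase_eq_of_notMem h])
        exact Or.inr ⟨hAi, by rwa [insert_erase hiA]⟩
    · exact Or.inl hB
  · rintro (hB | ⟨hB, hinsert⟩)
    · exact Or.inr hB
    · have hiB : i ∉ B := fun h => hB (by rwa [insert_eq_of_mem h] at hinsert)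
      exact Or.inl ⟨insert i B, hinsert, erase_insert hiB⟩

theorem card_compressFam : #(compressFam i 𝒜) = #𝒜 := by
  rw [compressFam_eq_down_compression, Down.card_compression]

theorem image_compressFam_subset (f : Finset (Fin m) → Finset (Fin m))
    (hf : ∀ A, f (A.erase i) = (f A).erase i) :
    (compressFam i 𝒜).image f ⊆ compressFam i (𝒜.image f) := by
  intro B hB
  simp only [compressFam, mem_image, mem_union, mem_filter] at hB ⊢
  rcases hB with ⟨A, ⟨A', hA', rfl⟩ | ⟨hA, hAi⟩, rfl⟩
  · exact Or.inl ⟨f A', ⟨A', hA', rfl⟩, (hf A').symm⟩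
  · exact Or.inr ⟨⟨A, hA, rfl⟩, A.erase i, hAi, hf A⟩

end

/-- For S ⊆ [m], i ∈ [m] and a family 𝒜 of subsets of [m],
|S ∩ 𝒜| ≥ |S ∩ 𝒞ᵢ(𝒜)| where S ∩ 𝒜 = {S ∩ A : A ∈ 𝒜}. -/
theorem card_inter_compress_le (m : ℕ) (S : Finset (Fin m)) (i : Fin m)
    (𝒜 : Finset (Finset (Fin m))) :
    ((compressFam i 𝒜).image (fun A => S ∩ A)).card ≤
      (𝒜.image (fun A => S ∩ A)).card :=
  calc #((compressFam i 𝒜).image (S ∩ ·))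
      _ ≤ #(compressFam i (𝒜.image (S ∩ ·))) :=
        card_le_card (image_compressFam_subset i 𝒜 _ (inter_erase i S))
      _ = #(𝒜.image (S ∩ ·)) := card_compressFam i _
end

section
/- Let 𝒜 be a family of subsets of [m]. There exists a family 𝒜̃ of subsets of [m] with |𝒜̃| = |𝒜| such that 𝒜̃ is a down family (for every A ∈ 𝒜̃, every subset of A belongs to 𝒜̃) and such that for every S ⊆ [m], |S ∩ 𝒜| ≥ |S ∩ 𝒜̃|. -/
open Finset FinsetFamily

variable {α : Type*} [DecidableEq α]

/-- The trace of a down-compression is contained in the down-compression of the trace. -/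
lemma trace_compression_subset (a : α) (S : Finset α) (𝒜 : Finset (Finset α)) :
    (Down.compression a 𝒜).image (fun A => S ∩ A) ⊆
      Down.compression a (𝒜.image (fun A => S ∩ A)) := by
  intro t ht
  rw [mem_image] at ht
  obtain ⟨s, hs, rfl⟩ := ht
  rw [Down.mem_compression] at hs ⊢
  have herase : ∀ u : Finset α, S ∩ u.erase a = (S ∩ u).erase a := by
    intro u; ext x; simp only [mem_inter, mem_erase]; tauto
  rcases hs with ⟨hs1, hs2⟩ | ⟨hs1, hs2⟩
  · left
    refine ⟨mem_image_of_mem _ hs1, ?_⟩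
    rw [← herase]
    exact mem_image_of_mem _ hs2
  · have ha : a ∉ s := fun h => hs1 (by rwa [insert_eq_of_mem h] at hs2)
    by_cases hmem : S ∩ s ∈ 𝒜.image (fun A => S ∩ A)
    · left
      refine ⟨hmem, ?_⟩
      rwa [erase_eq_of_notMem (fun h => ha (mem_inter.1 h).2)]
    · right
      refine ⟨hmem, ?_⟩
      by_cases haS : a ∈ S
      · have : insert a (S ∩ s) = S ∩ insert a s := by
          ext x; simp only [mem_insert, mem_inter]; aesop
        rw [this]
        exact mem_image_of_mem _ hs2
      · exact absurd (by
          have : S ∩ insert a s = S ∩ s := by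
            ext x; simp only [mem_inter, mem_insert]; aesop
          rw [← this]; exact mem_image_of_mem _ hs2) hmem

/-- Down-compression preserves closure under erasing `b`. -/
lemma compression_erase_closed (a b : α) (𝒜 : Finset (Finset α))
    (h : ∀ s ∈ 𝒜, s.erase b ∈ 𝒜) :
    ∀ s ∈ Down.compression a 𝒜, s.erase b ∈ Down.compression a 𝒜 := by
  intro s hs
  rcases eq_or_ne b a with rfl | hba
  · exact Down.erase_mem_compression_of_mem_compression hs
  rw [Down.mem_compression] at hs ⊢
  rcases hs with ⟨hs1, hs2⟩ | ⟨hs1, hs2⟩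
  · left
    refine ⟨h _ hs1, ?_⟩
    rw [erase_right_comm]
    exact h _ hs2
  · have ha : a ∉ s := fun hh => hs1 (by rwa [insert_eq_of_mem hh] at hs2)
    have key : insert a (s.erase b) ∈ 𝒜 := by
      have := h _ hs2
      rwa [erase_insert_of_ne hba.symm] at this
    by_cases hmem : s.erase b ∈ 𝒜
    · left
      refine ⟨hmem, ?_⟩
      rwa [erase_eq_of_notMem (fun hh => ha (mem_erase.1 hh).2)]
    · right
      exact ⟨hmem, key⟩

/-- A family closed under erasing every element is a down family. -/
lemma down_of_erase_closed (ℬ : Finset (Finset α))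
    (h : ∀ a : α, ∀ s ∈ ℬ, s.erase a ∈ ℬ) :
    ∀ A ∈ ℬ, ∀ B ⊆ A, B ∈ ℬ := by
  suffices H : ∀ n : ℕ, ∀ A ∈ ℬ, ∀ B ⊆ A, (A \ B).card = n → B ∈ ℬ by
    intro A hA B hB
    exact H _ A hA B hB rfl
  intro n
  induction n with
  | zero =>
    intro A hA B hB hcard
    have : A \ B = ∅ := card_eq_zero.1 hcard
    have hAB : A ⊆ B := fun x hx => by
      by_contra hxB
      exact absurd (mem_sdiff.2 ⟨hx, hxB⟩) (by simp [this])
    rw [Subset.antisymm hB hAB]; exact hA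
  | succ n ih =>
    intro A hA B hB hcard
    obtain ⟨a, ha⟩ : (A \ B).Nonempty := by
      rw [← card_pos, hcard]; omega
    rw [mem_sdiff] at ha
    refine ih (A.erase a) (h a A hA) B ?_ ?_
    · intro x hx
      exact mem_erase.2 ⟨fun hxa => ha.2 (hxa ▸ hx), hB hx⟩
    · have : A.erase a \ B = (A \ B).erase a := by
        ext x; simp only [mem_sdiff, mem_erase]; tauto
      rw [this, card_erase_of_mem (mem_sdiff.2 ha), hcard]
      omega

/-- Folding down-compressions over a list. -/
def compressList (l : List α) (𝒜 : Finset (Finset α)) : Finset (Finset α) :=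
  l.foldr (fun a ℬ => Down.compression a ℬ) 𝒜

lemma compressList_card (l : List α) (𝒜 : Finset (Finset α)) :
    (compressList l 𝒜).card = 𝒜.card := by
  induction l with
  | nil => rfl
  | cons a l ih => rw [compressList, List.foldr, Down.card_compression]; exact ih

lemma compressList_trace (l : List α) (𝒜 : Finset (Finset α)) (S : Finset α) :
    ((compressList l 𝒜).image (fun A => S ∩ A)).card ≤ (𝒜.image (fun A => S ∩ A)).card := by
  induction l with
  | nil => exact le_refl _
  | cons a l ih =>
    refine le_trans ?_ ih
    calc ((Down.compression a (compressList l 𝒜)).image (fun A => S ∩ A)).card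
        ≤ (Down.compression a ((compressList l 𝒜).image (fun A => S ∩ A))).card :=
          card_le_card (trace_compression_subset a S _)
      _ = ((compressList l 𝒜).image (fun A => S ∩ A)).card := Down.card_compression _ _

lemma compressList_erase_closed (l : List α) (𝒜 : Finset (Finset α)) (a : α) (ha : a ∈ l) :
    ∀ s ∈ compressList l 𝒜, s.erase a ∈ compressList l 𝒜 := by
  induction l with
  | nil => simp at ha
  | cons b l ih =>
    rcases List.mem_cons.1 ha with rfl | ha'
    · exact fun s hs => Down.erase_mem_compression_of_mem_compression hs
    · exact compression_erase_closed b a _ (ih ha')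

/-- For any family 𝒜 of subsets of [m] there is a down family 𝒜̃ of the same size with
|S ∩ 𝒜| ≥ |S ∩ 𝒜̃| for every S ⊆ [m]. -/
theorem exists_down_family (m : ℕ) (𝒜 : Finset (Finset (Fin m))) :
    ∃ 𝒜' : Finset (Finset (Fin m)),
      𝒜'.card = 𝒜.card ∧
      (∀ A ∈ 𝒜', ∀ B ⊆ A, B ∈ 𝒜') ∧
      ∀ S : Finset (Fin m),
        (𝒜'.image (fun A => S ∩ A)).card ≤ (𝒜.image (fun A => S ∩ A)).card := by
  refine ⟨compressList (List.finRange m) 𝒜, compressList_card _ _, ?_, fun S =>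
    compressList_trace _ _ _⟩
  exact down_of_erase_closed _ (fun a => compressList_erase_closed _ _ a (List.mem_finRange a))
end

section
/- Let k ≥ 2. Suppose there exist c > 0 and 0 < γ ≤ 1 such that for all m ≥ k, every simple m×⌊c·m^{k−1}⌋ (0,1)-matrix makes m^{1−γ} contributions. Then there exists c' > 0 such that for all m ≥ k, every simple m×⌊c'·m^{k−1}⌋ (0,1)-matrix makes m^{1−γ'} contributions, where γ' = γ/(k−1+γ). -/
/-- A (0,1)-matrix (entries in `Bool`) is *simple* if its columns are pairwise distinct. -/
def SimpleMatrix {m n : ℕ} (M : Matrix (Fin m) (Fin n) Bool) : Prop :=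
  ∀ c c' : Fin n, (∀ r : Fin m, M r c = M r c') → c = c'

/-- `M` contains `F` as an induced submatrix: `F` can be obtained from `M` by deleting
rows and columns (order preserved). -/
def ContainsInduced {m n k l : ℕ} (M : Matrix (Fin m) (Fin n) Bool)
    (F : Matrix (Fin k) (Fin l) Bool) : Prop :=
  ∃ r : Fin k → Fin m, ∃ c : Fin l → Fin n,
    StrictMono r ∧ StrictMono c ∧ ∀ i j, M (r i) (c j) = F i j

/-- `M` makes `i` contributions (with respect to `k`): there exist pairs
`(R j, C j)` with `|R j| = k`, `|C j| = 2^k`, each submatrix `M[R j, C j]` is simple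
(its columns, restricted to the rows `R j`, are pairwise distinct), and any two pairs
with the same row set have all columns of one strictly before all columns of the other. -/
def Makes (k : ℕ) {m n : ℕ} (M : Matrix (Fin m) (Fin n) Bool) (i : ℕ) : Prop :=
  ∃ R : Fin i → Finset (Fin m), ∃ C : Fin i → Finset (Fin n),
    (∀ j, (R j).card = k) ∧ (∀ j, (C j).card = 2 ^ k) ∧
    (∀ j, ∀ c ∈ C j, ∀ c' ∈ C j, (∀ r ∈ R j, M r c = M r c') → c = c') ∧
    (∀ j j', j ≠ j' → R j = R j' →
      (∀ x ∈ C j, ∀ y ∈ C j', x < y) ∨ (∀ x ∈ C j', ∀ y ∈ C j, x < y))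

/-- `M` makes at least `x` contributions, for a real number `x`. -/
def MakesR (k : ℕ) {m n : ℕ} (M : Matrix (Fin m) (Fin n) Bool) (x : ℝ) : Prop :=
  ∃ i : ℕ, x ≤ (i : ℝ) ∧ Makes k M i

/-!
Write `N = ⌈m ^ (1 - γ')⌉` and view the columns of `M` as a family `𝒜` of `n` subsets of the
rows. A `k`-set of rows carrying a simple `k × 2^k` submatrix is exactly a `k`-set shattered
by `𝒜`, so if `𝒜` shatters `N` such sets we are done. Otherwise all shattered `k`-sets lie in
a set `X` of `p = min (k N) m` rows. If the columns have many distinct traces on `X`, we cut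
these traces into `G ≈ N p^(γ-1)` consecutive blocks of `⌊c p^(k-1)⌋` columns; each block is a
simple `p`-row matrix, so makes `p^(1-γ)` contributions by hypothesis, and the blocks are
separated, so their contributions add up to `N`. If there are few traces, down-compress `𝒜`
to a lower family of the same size; compression creates no new shattered sets and no new
traces. All `k`-subsets of a member of size `≥ k` are then shattered, so the member lies inside
`X` and is counted by the traces, while the remaining members have size `< k`; this bounds `n` by
`O(m^(k-1))`, a contradiction for large `c'`. The exponent `γ'` is chosen so that
`N · p^(k-2+γ) ≈ N^(k-1+γ) ≈ m^(k-1)`.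
-/

open Finset FinsetFamily

namespace Finset

variable {α : Type*}

lemma subset_of_isLowerSet_of_forall_card_eq {ℬ : Finset (Finset α)}
    (hℬ : IsLowerSet (ℬ : Set (Finset α))) {k : ℕ} (hk : 0 < k) {X : Finset α}
    (hX : ∀ s ∈ ℬ, #s = k → s ⊆ X) {A : Finset α} (hA : A ∈ ℬ) (hkA : k ≤ #A) : A ⊆ X := by
  intro x hx
  obtain ⟨K, hxK, hKA, hK⟩ := exists_subsuperset_card_eq (singleton_subset_iff.2 hx)
    (by rwa [card_singleton]) hkA
  exact hX K (hℬ hKA hA) hK (singleton_subset_iff.1 hxK)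

variable [DecidableEq α]

def trace (𝒜 : Finset (Finset α)) (S : Finset α) : Finset (Finset α) := 𝒜.image (S ∩ ·)

lemma isLowerSet_of_forall_erase_mem {𝒜 : Finset (Finset α)}
    (h : ∀ s ∈ 𝒜, ∀ a, s.erase a ∈ 𝒜) : IsLowerSet (𝒜 : Set (Finset α)) := by
  have hsdiff : ∀ d, ∀ s ∈ 𝒜, s \ d ∈ 𝒜 := by
    intro d
    induction d using Finset.induction_on with
    | empty => simp
    | insert x d _ ih => exact fun s hs ↦ sdiff_insert s d x ▸ h _ (ih s hs) x
  intro s t hts hs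
  rw [mem_coe, ← sdiff_sdiff_eq_self hts]
  exact hsdiff _ s hs

lemma card_filter_card_lt_le [Fintype α] (𝒜 : Finset (Finset α)) (k : ℕ) :
    #{s ∈ 𝒜 | #s < k} ≤ k * (Fintype.card α + 1) ^ (k - 1) := by
  have hsub : {s ∈ 𝒜 | #s < k} ⊆ (range k).biUnion fun i ↦ powersetCard i univ := by
    intro s hs
    simp only [mem_filter] at hs
    simpa using hs.2
  calc #{s ∈ 𝒜 | #s < k}
      ≤ ∑ i ∈ range k, (Fintype.card α).choose i := by
        simpa using (card_le_card hsub).trans card_biUnion_le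
    _ ≤ ∑ _i ∈ range k, (Fintype.card α + 1) ^ (k - 1) := by
        refine sum_le_sum fun i hi ↦ ?_
        calc (Fintype.card α).choose i ≤ (Fintype.card α + 1) ^ i :=
              (Nat.choose_le_pow _ _).trans (Nat.pow_le_pow_left (by omega) _)
          _ ≤ _ := Nat.pow_le_pow_right (by omega) (by simp at hi; omega)
    _ = k * (Fintype.card α + 1) ^ (k - 1) := by simp

end Finset

namespace Down

variable {α : Type*} [DecidableEq α]

lemma compression_eq_image (a : α) (𝒜 : Finset (Finset α)) :
    𝓓 a 𝒜 = 𝒜.image fun s ↦ if s.erase a ∈ 𝒜 then s else s.erase a := by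
  ext t
  simp only [compression, mem_disjUnion, mem_filter, mem_image]
  constructor
  · rintro (⟨ht, hta⟩ | ⟨⟨s, hs, rfl⟩, ht⟩)
    · exact ⟨t, ht, if_pos hta⟩
    · exact ⟨s, hs, if_neg ht⟩
  · rintro ⟨s, hs, rfl⟩
    split_ifs with h
    · exact Or.inl ⟨hs, h⟩
    · exact Or.inr ⟨⟨s, hs, rfl⟩, h⟩

lemma sum_card_compression_lt {𝒜 : Finset (Finset α)} {a : α} {s : Finset α}
    (hs : s ∈ 𝒜) (hsa : s.erase a ∉ 𝒜) :
    ∑ t ∈ 𝓓 a 𝒜, #t < ∑ t ∈ 𝒜, #t := by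
  rw [compression_eq_image]
  refine (sum_image_le_of_nonneg fun _ _ ↦ Nat.zero_le _).trans_lt <|
    sum_lt_sum (fun t _ ↦ ?_) ⟨s, hs, ?_⟩
  · split_ifs
    exacts [le_rfl, card_erase_le]
  · rw [if_neg hsa]
    exact card_erase_lt_of_mem <| by_contra fun ha ↦ hsa (by rwa [erase_eq_of_notMem ha])

lemma trace_compression_subset (a : α) (𝒜 : Finset (Finset α)) (S : Finset α) :
    (𝓓 a 𝒜).trace S ⊆ 𝓓 a (𝒜.trace S) := by
  simp only [subset_iff, trace, mem_image]
  rintro _ ⟨t, ht, rfl⟩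
  rcases mem_compression.1 ht with ⟨ht, hta⟩ | ⟨htA, hat⟩
  · refine mem_compression.2 <| Or.inl ⟨mem_image_of_mem _ ht, ?_⟩
    rw [← inter_erase]
    exact mem_image_of_mem _ hta
  · have ha : a ∉ t := fun h ↦ htA (by rwa [insert_eq_of_mem h] at hat)
    rw [← erase_insert ha, inter_erase]
    exact erase_mem_compression (mem_image_of_mem _ hat)

lemma card_trace_compression_le (a : α) (𝒜 : Finset (Finset α)) (S : Finset α) :
    #((𝓓 a 𝒜).trace S) ≤ #(𝒜.trace S) :=
  (card_le_card (trace_compression_subset a 𝒜 S)).trans_eq (card_compression _ _)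

end Down

namespace Finset

variable {α : Type*} [DecidableEq α]

/-- Iterate down-compressions; each one that changes the family lowers `∑ s ∈ 𝒜, #s`. -/
lemma exists_isLowerSet_subset_shatterer (𝒜 : Finset (Finset α)) :
    ∃ ℬ : Finset (Finset α), #ℬ = #𝒜 ∧ IsLowerSet (ℬ : Set (Finset α)) ∧
      ℬ ⊆ 𝒜.shatterer ∧ ∀ S, #(ℬ.trace S) ≤ #(𝒜.trace S) := by
  induction h : ∑ s ∈ 𝒜, #s using Nat.strong_induction_on generalizing 𝒜 with
  | _ n ih =>
  by_cases hlow : ∀ s ∈ 𝒜, ∀ a, s.erase a ∈ 𝒜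
  · exact ⟨𝒜, rfl, isLowerSet_of_forall_erase_mem hlow,
      subset_shatterer (isLowerSet_of_forall_erase_mem hlow), fun _ ↦ le_rfl⟩
  push Not at hlow
  obtain ⟨s, hs, a, hsa⟩ := hlow
  obtain ⟨ℬ, hcard, hℬ, hsh, htr⟩ := ih _ (h ▸ Down.sum_card_compression_lt hs hsa) (𝓓 a 𝒜) rfl
  exact ⟨ℬ, hcard.trans (Down.card_compression a 𝒜), hℬ,
    hsh.trans (shatterer_compress_subset_shatterer a 𝒜),
    fun S ↦ (htr S).trans (Down.card_trace_compression_le a 𝒜 S)⟩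

lemma card_le_of_shatters_subset [Fintype α] {k : ℕ} (hk : 0 < k) {𝒜 : Finset (Finset α)}
    {X : Finset α} (hX : ∀ s, #s = k → 𝒜.Shatters s → s ⊆ X) :
    #𝒜 ≤ k * (Fintype.card α + 1) ^ (k - 1) + #(𝒜.trace X) := by
  obtain ⟨ℬ, hcard, hℬ, hsh, htr⟩ := exists_isLowerSet_subset_shatterer 𝒜
  have hbig : {s ∈ ℬ | ¬ #s < k} ⊆ ℬ.trace X := by
    intro A hA
    rw [mem_filter, not_lt] at hA
    have hAX := subset_of_isLowerSet_of_forall_card_eq hℬ hk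
      (fun s hs hsk ↦ hX s hsk (mem_shatterer.1 (hsh hs))) hA.1 hA.2
    exact mem_image.2 ⟨A, hA.1, inter_eq_right.2 hAX⟩
  rw [← hcard, ← card_filter_add_card_filter_not (fun s ↦ #s < k)]
  exact add_le_add (card_filter_card_lt_le ℬ k) ((card_le_card hbig).trans (htr X))

end Finset

lemma finProdFinEquiv_lt_of_fst_lt {G q : ℕ} {g g' : Fin G} (j j' : Fin q) (h : g < g') :
    finProdFinEquiv (g, j) < finProdFinEquiv (g', j') := by
  rw [Fin.lt_def] at h ⊢
  simp only [finProdFinEquiv_apply_val]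
  nlinarith [j.isLt]

lemma strictMono_finProdFinEquiv_mk {G q : ℕ} (g : Fin G) :
    StrictMono fun j : Fin q ↦ finProdFinEquiv (g, j) := by
  intro j j' h
  rw [Fin.lt_def] at h ⊢
  simp only [finProdFinEquiv_apply_val]
  omega

lemma Fin.exists_strictMono_injective_comp {n : ℕ} {β : Type*} [DecidableEq β] (φ : Fin n → β)
    {q : ℕ} (hq : q ≤ #(univ.image φ)) :
    ∃ f : Fin q → Fin n, StrictMono f ∧ (φ ∘ f).Injective := by
  obtain ⟨u, -, hinj, himg⟩ :=
    exists_subset_injOn_image_eq_of_surjOn (f := φ) Set.univ (univ.image φ) (by simp [Set.SurjOn])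
  have hu : #(univ.image φ) = #u := by rw [← himg, card_image_of_injOn hinj]
  obtain ⟨v, hvu, hv⟩ := exists_subset_card_eq (hq.trans_eq hu)
  refine ⟨v.orderEmbOfFin hv, (v.orderEmbOfFin hv).strictMono, fun a b hab ↦ ?_⟩
  exact (v.orderEmbOfFin hv).injective <|
    hinj (hvu (orderEmbOfFin_mem _ _ _)) (hvu (orderEmbOfFin_mem _ _ _)) hab

section Matrix

variable {m n k : ℕ} {M : Matrix (Fin m) (Fin n) Bool}

def colSupport (M : Matrix (Fin m) (Fin n) Bool) (j : Fin n) : Finset (Fin m) :=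
  univ.filter fun r ↦ M r j = true

def colFamily (M : Matrix (Fin m) (Fin n) Bool) : Finset (Finset (Fin m)) :=
  univ.image (colSupport M)

lemma inter_colSupport_eq_iff {S : Finset (Fin m)} {a b : Fin n} :
    S ∩ colSupport M a = S ∩ colSupport M b ↔ ∀ r ∈ S, M r a = M r b := by
  simp only [Finset.ext_iff, mem_inter, colSupport, mem_filter, mem_univ, true_and]
  refine forall_congr' fun r ↦ ⟨fun h hr ↦ ?_, fun h ↦ ?_⟩
  · simpa [hr] using h
  · by_cases hr : r ∈ S <;> simp [hr, h]

lemma SimpleMatrix.card_colFamily (hM : SimpleMatrix M) : #(colFamily M) = n := by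
  rw [colFamily, card_image_of_injective, card_univ, Fintype.card_fin]
  intro a b h
  exact hM a b fun r ↦ inter_colSupport_eq_iff.1 (congrArg (univ ∩ ·) h) r (mem_univ r)

lemma Makes.mono {i i' : ℕ} (h : Makes k M i) (hle : i' ≤ i) : Makes k M i' := by
  obtain ⟨R, C, hR, hC, hsimple, hsep⟩ := h
  exact ⟨R ∘ Fin.castLE hle, C ∘ Fin.castLE hle, fun j ↦ hR _, fun j ↦ hC _,
    fun j ↦ hsimple _, fun j j' hne ↦ hsep _ _ ((Fin.castLE_injective hle).ne hne)⟩

lemma MakesR.makes_ceil {x : ℝ} (h : MakesR k M x) : Makes k M ⌈x⌉₊ := by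
  obtain ⟨i, hx, hi⟩ := h
  exact hi.mono (Nat.ceil_le.2 hx)

lemma makes_card_shatterer_filter_card_eq :
    Makes k M #{K ∈ (colFamily M).shatterer | #K = k} := by
  set T := {K ∈ (colFamily M).shatterer | #K = k}
  set K : Fin #T → Finset (Fin m) := fun j ↦ T.equivFin.symm j
  have hK : ∀ j, (colFamily M).Shatters (K j) ∧ #(K j) = k := fun j ↦
    (mem_filter.1 (T.equivFin.symm j).2).imp_left mem_shatterer.1
  have hcol : ∀ j, ∀ B ∈ (K j).powerset, ∃ col : Fin n, K j ∩ colSupport M col = B := by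
    intro j B hB
    obtain ⟨u, hu, huB⟩ := (hK j).1 (mem_powerset.1 hB)
    obtain ⟨col, -, rfl⟩ := mem_image.1 hu
    exact ⟨col, huB⟩
  choose F hF using hcol
  have hFinj : ∀ j, (fun B : (K j).powerset ↦ F j B.1 B.2).Injective := by
    intro j B B' h
    rw [Subtype.ext_iff, ← hF j B B.2, ← hF j B' B'.2]
    exact congrArg (K j ∩ colSupport M ·) h
  refine ⟨K, fun j ↦ (K j).powerset.attach.image fun B ↦ F j B.1 B.2, fun j ↦ (hK j).2,
    fun j ↦ ?_, fun j c hc c' hc' hrows ↦ ?_, fun j j' hne hKj ↦ ?_⟩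
  · rw [card_image_of_injective _ (hFinj j), card_attach, card_powerset, (hK j).2]
  · obtain ⟨B, -, rfl⟩ := mem_image.1 hc
    obtain ⟨B', -, rfl⟩ := mem_image.1 hc'
    rw [← inter_colSupport_eq_iff, hF, hF] at hrows
    rw [Subtype.ext hrows]
  · exact absurd (T.equivFin.symm.injective (Subtype.ext hKj)) hne

lemma makes_mul_of_blocks {p G q I : ℕ} (r : Fin p → Fin m) (hr : r.Injective)
    (c : Fin G → Fin q → Fin n) (hc : ∀ g, StrictMono (c g))
    (hsep : ∀ g g' j j', g < g' → c g j < c g' j')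
    (h : ∀ g, Makes k (M.submatrix r (c g)) I) : Makes k M (G * I) := by
  choose R C hR hC hsimple hdisj using h
  set e : Fin (G * I) ≃ Fin G × Fin I := finProdFinEquiv.symm
  refine ⟨fun x ↦ (R (e x).1 (e x).2).map ⟨r, hr⟩,
    fun x ↦ (C (e x).1 (e x).2).map ⟨c (e x).1, (hc _).injective⟩,
    fun x ↦ by simp [hR], fun x ↦ by simp [hC], fun x ↦ ?_, fun x x' hne hRx ↦ ?_⟩
  · simp only [forall_mem_map, Function.Embedding.coeFn_mk]
    exact fun a ha b hb hab ↦ congrArg _ (hsimple _ _ a ha b hb hab)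
  simp only [forall_mem_map, Function.Embedding.coeFn_mk]
  rcases lt_trichotomy (e x).1 (e x').1 with hlt | heq | hgt
  · exact Or.inl fun a _ b _ ↦ hsep _ _ a b hlt
  · rw [map_inj, ← heq] at hRx
    have hne' : (e x).2 ≠ (e x').2 := fun h ↦ hne (e.injective (Prod.ext heq h))
    rw [← heq]
    exact (hdisj _ _ _ hne' hRx).imp (fun h a ha b hb ↦ hc _ (h a ha b hb))
      (fun h a ha b hb ↦ hc _ (h a ha b hb))
  · exact Or.inr fun a _ b _ ↦ hsep _ _ a b hgt

lemma makes_mul_of_card_trace {p w G I : ℕ} {S : Finset (Fin m)} (hS : #S = p)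
    (hyp : ∀ M' : Matrix (Fin p) (Fin w) Bool, SimpleMatrix M' → Makes k M' I)
    (htrace : G * w ≤ #((colFamily M).trace S)) : Makes k M (G * I) := by
  rw [trace, colFamily, image_image] at htrace
  obtain ⟨f, hf, hinj⟩ := Fin.exists_strictMono_injective_comp _ htrace
  set r := S.orderEmbOfFin hS
  refine makes_mul_of_blocks r r.injective (fun g j ↦ f (finProdFinEquiv (g, j)))
    (fun g ↦ hf.comp (strictMono_finProdFinEquiv_mk g))
    (fun g g' j j' hg ↦ hf (finProdFinEquiv_lt_of_fst_lt j j' hg)) fun g ↦ hyp _ ?_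
  intro a b hab
  have hrows : ∀ x ∈ S, M x (f (finProdFinEquiv (g, a))) = M x (f (finProdFinEquiv (g, b))) := by
    intro x hx
    obtain ⟨i, rfl⟩ : x ∈ Set.range r := by rwa [range_orderEmbOfFin]
    exact hab i
  simpa using finProdFinEquiv.injective (hinj (inter_colSupport_eq_iff.2 hrows))

end Matrix

lemma le_natCeil_mul_natCeil (x : ℝ) {p : ℝ} (hp : 0 < p) (γ : ℝ) :
    x ≤ (⌈x * p ^ (γ - 1)⌉₊ * ⌈p ^ (1 - γ)⌉₊ : ℝ) :=
  calc x = x * p ^ (γ - 1) * p ^ (1 - γ) := by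
        rw [mul_assoc, ← Real.rpow_add hp, sub_add_sub_cancel', sub_self, Real.rpow_zero, mul_one]
    _ ≤ _ := mul_le_mul (Nat.le_ceil _) (Nat.le_ceil _) (by positivity) (by positivity)

lemma natCeil_mul_natFloor_le {k : ℕ} (hk : 2 ≤ k) {c γ N p K : ℝ} (hc : 0 ≤ c) (hγ : 0 ≤ γ)
    (hN : 0 ≤ N) (hp : 0 < p) (hNK : N ≤ K) (hpK : p ≤ K) :
    (⌈N * p ^ (γ - 1)⌉₊ * ⌊c * p ^ (k - 1)⌋₊ : ℝ) ≤ c * (K ^ ((k : ℝ) - 1 + γ) + p ^ (k - 1)) := by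
  have hexp : 0 ≤ (k : ℝ) - 2 + γ := by
    have : (2 : ℝ) ≤ k := by exact_mod_cast hk
    linarith
  have hK : 0 ≤ K := hp.le.trans hpK
  have hpow : p ^ (γ - 1) * p ^ (k - 1) = p ^ ((k : ℝ) - 2 + γ) := by
    rw [← Real.rpow_natCast, ← Real.rpow_add hp, Nat.cast_sub (by omega)]
    ring_nf
  calc (⌈N * p ^ (γ - 1)⌉₊ * ⌊c * p ^ (k - 1)⌋₊ : ℝ)
      ≤ (N * p ^ (γ - 1) + 1) * (c * p ^ (k - 1)) :=
        mul_le_mul (Nat.ceil_lt_add_one (by positivity)).le (Nat.floor_le (by positivity))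
          (Nat.cast_nonneg _) (by positivity)
    _ = c * (N * p ^ ((k : ℝ) - 2 + γ) + p ^ (k - 1)) := by rw [← hpow]; ring
    _ ≤ c * (K * K ^ ((k : ℝ) - 2 + γ) + p ^ (k - 1)) := by gcongr
    _ = c * (K ^ ((k : ℝ) - 1 + γ) + p ^ (k - 1)) := by
        rw [← Real.rpow_one_add' hK (by linarith)]
        ring_nf

lemma rpow_le_of_le_mul_rpow {k : ℕ} (hk : 2 ≤ k) {γ m K : ℝ} (hγ : 0 < γ) (hγ1 : γ ≤ 1)
    (hm : 0 ≤ m) (hK : 0 ≤ K) (hKm : K ≤ 2 * k * m ^ (1 - γ / ((k : ℝ) - 1 + γ))) :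
    K ^ ((k : ℝ) - 1 + γ) ≤ (2 * k) ^ k * m ^ (k - 1) := by
  have hkR : (2 : ℝ) ≤ k := by exact_mod_cast hk
  have hd : 0 < (k : ℝ) - 1 + γ := by linarith
  have hexp : (1 - γ / ((k : ℝ) - 1 + γ)) * ((k : ℝ) - 1 + γ) = ((k - 1 : ℕ) : ℝ) := by
    rw [Nat.cast_sub (by omega)]
    field_simp
    ring
  calc K ^ ((k : ℝ) - 1 + γ)
      ≤ (2 * k * m ^ (1 - γ / ((k : ℝ) - 1 + γ))) ^ ((k : ℝ) - 1 + γ) := by gcongr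
    _ = (2 * k) ^ ((k : ℝ) - 1 + γ) * m ^ (k - 1) := by
        rw [Real.mul_rpow (by positivity) (by positivity), ← Real.rpow_mul hm, hexp,
          Real.rpow_natCast]
    _ ≤ (2 * k) ^ k * m ^ (k - 1) := by
        rw [← Real.rpow_natCast (2 * (k : ℝ)) k]
        gcongr <;> linarith

lemma natCeil_mul_natFloor_le_mul_pow {k m N p : ℕ} (hk : 2 ≤ k) (hm : 1 ≤ m) {c γ : ℝ}
    (hc : 0 ≤ c) (hγ : 0 < γ) (hγ1 : γ ≤ 1)
    (hN : N = ⌈(m : ℝ) ^ (1 - γ / ((k : ℝ) - 1 + γ))⌉₊) (hp : p = min (k * N) m) :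
    (⌈N * (p : ℝ) ^ (γ - 1)⌉₊ * ⌊c * (p : ℝ) ^ (k - 1)⌋₊ : ℝ) ≤
      c * ((2 * k) ^ k + 1) * m ^ (k - 1) := by
  have hkR : (2 : ℝ) ≤ k := by exact_mod_cast hk
  have hmR : (1 : ℝ) ≤ m := by exact_mod_cast hm
  have hx : 1 ≤ (m : ℝ) ^ (1 - γ / ((k : ℝ) - 1 + γ)) :=
    Real.one_le_rpow hmR (sub_nonneg.2 ((div_le_one (by linarith)).2 (by linarith)))
  have hN1 : 1 ≤ N := hN ▸ Nat.one_le_ceil_iff.2 (by linarith)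
  have hp0 : (0 : ℝ) < p := by
    have : 1 ≤ p := hp ▸ le_min (Nat.mul_pos (by omega) hN1) hm
    exact_mod_cast this
  have hpkN : (p : ℝ) ≤ k * N := by exact_mod_cast hp ▸ min_le_left _ _
  have hpm : (p : ℝ) ≤ m := by exact_mod_cast hp ▸ min_le_right _ _
  have hkN : (k * N : ℝ) ≤ 2 * k * (m : ℝ) ^ (1 - γ / ((k : ℝ) - 1 + γ)) := by
    have : (N : ℝ) ≤ 2 * (m : ℝ) ^ (1 - γ / ((k : ℝ) - 1 + γ)) := by
      linarith [hN ▸ Nat.ceil_lt_add_one (zero_le_one.trans hx)]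
    calc (k * N : ℝ) ≤ k * (2 * (m : ℝ) ^ (1 - γ / ((k : ℝ) - 1 + γ))) := by gcongr
      _ = _ := by ring
  calc (⌈N * (p : ℝ) ^ (γ - 1)⌉₊ * ⌊c * (p : ℝ) ^ (k - 1)⌋₊ : ℝ)
      ≤ c * ((k * N) ^ ((k : ℝ) - 1 + γ) + p ^ (k - 1)) :=
        natCeil_mul_natFloor_le hk hc hγ.le (Nat.cast_nonneg _) hp0
          (le_mul_of_one_le_left (Nat.cast_nonneg _) (by linarith)) hpkN
    _ ≤ c * ((2 * k) ^ k * m ^ (k - 1) + m ^ (k - 1)) := by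
        gcongr
        exact rpow_le_of_le_mul_rpow hk hγ hγ1 (by positivity) (by positivity) hkN
    _ = c * ((2 * k) ^ k + 1) * m ^ (k - 1) := by ring

lemma add_natCeil_mul_natFloor_le_natFloor {k m N p : ℕ} (hk : 2 ≤ k) (hm : 1 ≤ m) {c γ : ℝ}
    (hc : 0 ≤ c) (hγ : 0 < γ) (hγ1 : γ ≤ 1)
    (hN : N = ⌈(m : ℝ) ^ (1 - γ / ((k : ℝ) - 1 + γ))⌉₊) (hp : p = min (k * N) m) :
    k * (m + 1) ^ (k - 1) + ⌈N * (p : ℝ) ^ (γ - 1)⌉₊ * ⌊c * (p : ℝ) ^ (k - 1)⌋₊ ≤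
      ⌊(k * 2 ^ (k - 1) + c * ((2 * k) ^ k + 1)) * (m : ℝ) ^ (k - 1)⌋₊ := by
  have hsucc : (k * (m + 1) ^ (k - 1) : ℝ) ≤ k * 2 ^ (k - 1) * m ^ (k - 1) := by
    rw [mul_assoc, ← mul_pow]
    gcongr
    have : (1 : ℝ) ≤ m := by exact_mod_cast hm
    linarith
  apply Nat.le_floor
  push_cast
  linarith [natCeil_mul_natFloor_le_mul_pow hk hm hc hγ hγ1 hN hp]

/-- If every simple m×⌊c m^(k-1)⌋ matrix (m ≥ k) makes m^(1-γ) contributions, then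
there is c' > 0 such that every simple m×⌊c' m^(k-1)⌋ matrix (m ≥ k) makes
m^(1-γ') contributions, where γ' = γ/(k-1+γ). -/
theorem contributions_step_two (k : ℕ) (hk : 2 ≤ k) (c γ : ℝ)
    (hc : 0 < c) (hγ0 : 0 < γ) (hγ1 : γ ≤ 1)
    (hyp : ∀ m : ℕ, k ≤ m →
      ∀ M : Matrix (Fin m) (Fin (⌊c * (m : ℝ) ^ (k - 1)⌋₊)) Bool,
        SimpleMatrix M → MakesR k M ((m : ℝ) ^ ((1 : ℝ) - γ))) :
    ∃ c' : ℝ, 0 < c' ∧ ∀ m : ℕ, k ≤ m →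
      ∀ M : Matrix (Fin m) (Fin (⌊c' * (m : ℝ) ^ (k - 1)⌋₊)) Bool,
        SimpleMatrix M → MakesR k M ((m : ℝ) ^ ((1 : ℝ) - γ / ((k : ℝ) - 1 + γ))) := by
  classical
  refine ⟨k * 2 ^ (k - 1) + c * ((2 * k) ^ k + 1), by positivity, fun m hkm M hM ↦ ?_⟩
  set N := ⌈(m : ℝ) ^ ((1 : ℝ) - γ / ((k : ℝ) - 1 + γ))⌉₊ with hN
  set T := {K ∈ (colFamily M).shatterer | #K = k}
  by_cases hT : N ≤ #T
  · exact ⟨N, Nat.le_ceil _, makes_card_shatterer_filter_card_eq.mono hT⟩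
  set p := min (k * N) m with hp
  have hTp : #(T.biUnion id) ≤ p := le_min
    ((card_biUnion_le_card_mul _ _ k fun K hK ↦ (mem_filter.1 hK).2.le).trans
      (Nat.mul_le_mul_right k (not_le.1 hT).le) |>.trans_eq (mul_comm _ _))
    (card_le_univ _ |>.trans_eq (Fintype.card_fin m))
  obtain ⟨X, hTX, -, hX⟩ := exists_subsuperset_card_eq (subset_univ _) hTp (by simp [p])
  by_cases htrace : ⌈N * (p : ℝ) ^ (γ - 1)⌉₊ * ⌊c * (p : ℝ) ^ (k - 1)⌋₊ ≤ #((colFamily M).trace X)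
  · have hkp : k ≤ p := le_min (Nat.le_mul_of_pos_right k
      (Nat.ceil_pos.2 (Real.rpow_pos_of_pos (by exact_mod_cast (by omega : 0 < m)) _))) hkm
    have hp0 : (0 : ℝ) < p := by exact_mod_cast (by omega : 0 < p)
    refine ⟨_, (Nat.le_ceil _).trans ((le_natCeil_mul_natCeil N hp0 γ).trans_eq
      (Nat.cast_mul _ _).symm),
      makes_mul_of_card_trace hX (fun M' hM' ↦ (hyp p hkp M' hM').makes_ceil) htrace⟩
  have hcount := card_le_of_shatters_subset (by omega : 0 < k) (𝒜 := colFamily M) (X := X)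
    fun s hs hsh ↦ (subset_biUnion_of_mem id (mem_filter.2 ⟨mem_shatterer.2 hsh, hs⟩)).trans hTX
  rw [hM.card_colFamily, Fintype.card_fin] at hcount
  have := add_natCeil_mul_natFloor_le_natFloor hk (by omega) hc.le hγ0 hγ1 hN hp
  omega
end

section
/- Let k ≥ 3 be an integer, set α = 2k/3 − 1, and define h : [α, k−1] → ℝ by h(x) = (−2x − 1 + √((2x+1)² + 8x(k−1)))/2. Then h is strictly increasing on [α, k−1], h(x) < x for every x ∈ (α, k−1], and h(α) = α. -/
/-- For k ≥ 3 and α = 2k/3 − 1, the map h(x) = (−2x−1+√((2x+1)²+8x(k−1)))/2 is strictly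
increasing on [α, k−1], satisfies h(x) < x on (α, k−1], and h(α) = α. -/
theorem h_properties (k : ℕ) (hk : 3 ≤ k) (α : ℝ) (hα : α = 2 * (k : ℝ) / 3 - 1)
    (h : ℝ → ℝ)
    (hh : ∀ x : ℝ, h x =
      (-2 * x - 1 + Real.sqrt ((2 * x + 1) ^ 2 + 8 * x * ((k : ℝ) - 1))) / 2) :
    StrictMonoOn h (Set.Icc α ((k : ℝ) - 1)) ∧
    (∀ x ∈ Set.Ioc α ((k : ℝ) - 1), h x < x) ∧
    h α = α := by
  have hk3 : (3 : ℝ) ≤ (k : ℝ) := by exact_mod_cast hk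
  have hα1 : (1 : ℝ) ≤ α := by rw [hα]; linarith
  refine ⟨?_, ?_, ?_⟩
  · -- strict mono
    intro a ha b hb hab
    rw [hh a, hh b]
    have ha1 : (1 : ℝ) ≤ a := le_trans hα1 ha.1
    have hDa : (0 : ℝ) ≤ (2 * a + 1) ^ 2 + 8 * a * ((k : ℝ) - 1) := by nlinarith
    have hsa := Real.sq_sqrt hDa
    have hsan := Real.sqrt_nonneg ((2 * a + 1) ^ 2 + 8 * a * ((k : ℝ) - 1))
    have hs : Real.sqrt ((2 * a + 1) ^ 2 + 8 * a * ((k : ℝ) - 1)) < 2 * a + 2 * k - 1 := by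
      rw [Real.sqrt_lt' (by linarith)]
      nlinarith
    have key : Real.sqrt ((2 * a + 1) ^ 2 + 8 * a * ((k : ℝ) - 1)) + 2 * (b - a) <
        Real.sqrt ((2 * b + 1) ^ 2 + 8 * b * ((k : ℝ) - 1)) := by
      have hy : (0 : ℝ) ≤ Real.sqrt ((2 * a + 1) ^ 2 + 8 * a * ((k : ℝ) - 1)) + 2 * (b - a) := by
        linarith
      rw [Real.lt_sqrt hy]
      nlinarith [mul_pos (sub_pos.2 hab) (sub_pos.2 hs)]
    linarith
  · -- h x < x
    intro x hx
    rw [hh x]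
    have hx1 : (1 : ℝ) < x := lt_of_le_of_lt hα1 hx.1
    have : Real.sqrt ((2 * x + 1) ^ 2 + 8 * x * ((k : ℝ) - 1)) < 4 * x + 1 := by
      rw [Real.sqrt_lt' (by linarith)]
      nlinarith [hx.1, hα]
    linarith
  · -- h α = α
    rw [hh α]
    have : Real.sqrt ((2 * α + 1) ^ 2 + 8 * α * ((k : ℝ) - 1)) = 4 * α + 1 := by
      rw [show (2 * α + 1) ^ 2 + 8 * α * ((k : ℝ) - 1) = (4 * α + 1) ^ 2 by nlinarith]
      exact Real.sqrt_sq (by linarith)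
    rw [this]; ring
end
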